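/- Suppose no vertex of the labeled control-flow graph (V_r, E_r) is labeled CopyAttr or PropagateAttrs. Let w = w₁·v and w' = w₂·v be two paths ending at the same vertex v, and let C ∈ 𝒞 be a production context stack. If f_pCtx(w, C) = f_pCtx(w', C), then f_pErr(w, C) = f_pErr(w', C). Consequently, given any set of paths ending at the same vertex that all share the same value of f_pCtx from the initial context stack, all of them share the same set of detected violations, so retaining exactly one representative per class preserves the existence of a violation-detecting path. -/
import Mathlib


/-!
Common model: Neverlang semantic-action verification (nlgcheck).

A production context is a pair `(k, m)` with `k ∈ ℕ` and `m : ℕ × I ⇀ T` a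
partial attribute map (modeled as `ℕ × I → Option T`).  A production context
stack is a *nonempty* list `c₀ … c_n` of production contexts (with `c_n` the
top); it is modeled as the pair of its top element `c_n` and the list of the
remaining elements `[c_{n-1}, …, c₀]` (top-first order).
-/

/-- Attribute maps: partial maps from (position, attribute name) to types. -/
abbrev AttrMap (I T : Type) := ℕ × I → Option T

/-- A production context: a position `k` together with an attribute map `m`. -/
abbrev ProdCtx (I T : Type) := ℕ × AttrMap I T

/-- A nonempty production context stack: the top context `c_n` together with
the list `[c_{n-1}, …, c₀]` of the contexts below it. -/
abbrev Stk (I T : Type) := ProdCtx I T × List (ProdCtx I T)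

/-- CFG node actions. -/
inductive Act (I T : Type) : Type where
  | writeAttr (i : ℕ) (η : I) (t : T)
  | readAttr (i : ℕ) (η : I) (t : T)
  | copyAttr (iDst : ℕ) (ηDst : I) (iSrc : ℕ) (ηSrc : I)
  | checkAttrType (i : ℕ) (η : I) (t : T)
  | propagateAttrs
  | beginEvalMetaAction (i : ℕ)
  | endEvalMetaAction
  | enterCtx (i : ℕ)
  | leaveCtx
  | nop
  | ignoreBranchAction

/-- Violations. -/
inductive Viol (I T : Type) : Type where
  | missingAttr (i : ℕ) (η : I)
  | badAttrT (i : ℕ) (η : I) (tReq : T) (tProv : T)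
  | attrTypeDynamicallyChecked (i : ℕ) (η : I) (t : T)

variable {I T : Type} [DecidableEq I]

/-- Update an attribute map at key `(i, η)` with value `t`. -/
def updMap (m : AttrMap I T) (i : ℕ) (η : I) (t : T) : AttrMap I T :=
  fun p => if p = (i, η) then some t else m p

/-- `get(C, i, η)` is `m_n(i, η)` when `i ≥ 1` or `C = c₀`, and is
`m_{n-1}(k_n, η)` when `i = 0` and `n ≥ 1`. -/
def getA : Stk I T → ℕ → I → Option T
  | (c, []), i, η => c.2 (i, η)
  | (c, c' :: _), i, η => if i = 0 then c'.2 (c.1, η) else c.2 (i, η)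

/-- `put(C, i, η, t)` updates `m_n` with `(i, η) ↦ t` when `i ≥ 1` or `C = c₀`,
and updates `m_{n-1}` with `(k_n, η) ↦ t` when `i = 0` and `n ≥ 1`. -/
def putA : Stk I T → ℕ → I → T → Stk I T
  | (c, []), i, η, t => ((c.1, updMap c.2 i η t), [])
  | (c, c' :: rest), i, η, t =>
      if i = 0 then (c, (c'.1, updMap c'.2 c.1 η t) :: rest)
      else ((c.1, updMap c.2 i η t), c' :: rest)

/-- Push a production context onto the stack. -/
def pushA (C : Stk I T) (c : ProdCtx I T) : Stk I T := (c, C.1 :: C.2)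

/-- Pop the top production context off the stack (identity on a singleton
stack, which never occurs in well-formed executions). -/
def popA : Stk I T → Stk I T
  | (c, []) => (c, [])
  | (_, c' :: rest) => (c', rest)

/-- `getAll(C, i)`: all the name/type attribute pairs at position `i` of the
current node, as a partial map from names to types. -/
def getAllA (C : Stk I T) (i : ℕ) : I → Option T := fun η => getA C i η

/-- `merge(m, X, j)`: add every pair of `X` at position `j` into `m` without
overwriting existing keys. -/
def mergeMap (m : AttrMap I T) (j : ℕ) (X : I → Option T) : AttrMap I T :=
  fun p =>
    if p.1 = j then
      match m p with
      | some t => some t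
      | none => X p.2
    else m p

/-- `putAll(C, i, X)`: add each pair of `X` at position `i` (resp. at `k_n` in
`m_{n-1}` when `i = 0` and `n ≥ 1`), without overwriting existing keys. -/
def putAllA : Stk I T → ℕ → (I → Option T) → Stk I T
  | (c, []), i, X => ((c.1, mergeMap c.2 i X), [])
  | (c, c' :: rest), i, X =>
      if i = 0 then (c, (c'.1, mergeMap c'.2 c.1 X) :: rest)
      else ((c.1, mergeMap c.2 i X), c' :: rest)

/-- The head of a production context stack:
`head(C) = m₀` if `C = c₀`, and
`head(C) = m_n ∪ {(0, η) ↦ t : m_{n-1}(k_n, η) = t}` if `n ≥ 1`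
(the entries at position `0` come from `m_{n-1}` at key `(k_n, ·)`; the entries
at positions `i ≥ 1` come from `m_n`). -/
def headC : Stk I T → AttrMap I T
  | (c, []) => c.2
  | (c, c' :: _) => fun p => if p.1 = 0 then c'.2 (c.1, p.2) else c.2 p

/-- A production context with empty attribute map, at position `i`. -/
def emptyCtx (i : ℕ) : ProdCtx I T := (i, fun _ => none)

/-- `f_aCtx`: the context-transformation component of the action semantics
`f_action`. -/
def fACtx (C : Stk I T) : Act I T → Stk I T
  | .writeAttr i η t => putA C i η t
  | .copyAttr iDst ηDst iSrc ηSrc =>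
      match getA C iSrc ηSrc with
      | none => C
      | some t => putA C iDst ηDst t
  | .propagateAttrs => putAllA C 0 (getAllA C 1)
  | .enterCtx i => pushA C (emptyCtx i)
  | .leaveCtx => popA C
  | _ => C

/-- `f_aErr`: the violation component of the action semantics `f_action`,
relative to a (decidable) subtyping relation `sub`. -/
def fAErr (sub : T → T → Prop) [DecidableRel sub] (C : Stk I T) :
    Act I T → Set (Viol I T)
  | .readAttr i η t =>
      match getA C i η with
      | none => {Viol.missingAttr i η}
      | some tp => if sub tp t then ∅ else {Viol.badAttrT i η t tp}
  | .copyAttr _ _ iSrc ηSrc =>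
      match getA C iSrc ηSrc with
      | none => {Viol.missingAttr iSrc ηSrc}
      | some _ => ∅
  | .checkAttrType i η t => {Viol.attrTypeDynamicallyChecked i η t}
  | _ => ∅

/-- `f_action`: maps a production context stack and an action to a new
production context stack and a set of violations. -/
def fAction (sub : T → T → Prop) [DecidableRel sub] (C : Stk I T)
    (a : Act I T) : Stk I T × Set (Viol I T) :=
  (fACtx C a, fAErr sub C a)

variable {V : Type}

/-- `f_pCtx`: overall change to the production context stack along a path
(a list of CFG vertices), given the labeling `a_node`. -/
def fPCtx (aNode : V → Act I T) : List V → Stk I T → Stk I T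
  | [], C => C
  | v :: w', C => fPCtx aNode w' (fACtx C (aNode v))

/-- `f_pErr`: the set of violations detected at the last node of a path:
`f_pErr(ε, C) = ∅` and `f_pErr(w'·v, C) = f_aErr(f_pCtx(w', C), a_node(v))`. -/
def fPErr (sub : T → T → Prop) [DecidableRel sub] (aNode : V → Act I T)
    (w : List V) (C : Stk I T) : Set (Viol I T) :=
  match w.getLast? with
  | none => ∅
  | some v => fAErr sub (fPCtx aNode w.dropLast C) (aNode v)

/-- `A_pb`: prefixes of balanced action sequences. -/
inductive IsBalPrefix : List (Act I T) → Prop where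
  | nil : IsBalPrefix []
  | cons {b : List (Act I T)} (a : Act I T) (hb : IsBalPrefix b)
      (ha : a ≠ .leaveCtx) : IsBalPrefix (a :: b)
  | snoc {b : List (Act I T)} (a : Act I T) (hb : IsBalPrefix b)
      (ha : a ≠ .leaveCtx) : IsBalPrefix (b ++ [a])
  | wrap {b : List (Act I T)} (i : ℕ) (hb : IsBalPrefix b) :
      IsBalPrefix (.enterCtx i :: (b ++ [.leaveCtx]))

/-- An action is neither a `CopyAttr` nor a `PropagateAttrs`. -/
def NotCopyProp (a : Act I T) : Prop :=
  (∀ iDst ηDst iSrc ηSrc, a ≠ .copyAttr iDst ηDst iSrc ηSrc) ∧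
    a ≠ .propagateAttrs

/-- `top_k(c₀ … c_n)`: the `k` topmost items of the stack (topmost first). -/
def topk (k : ℕ) (C : Stk I T) : List (ProdCtx I T) := (C.1 :: C.2).take k


theorem fPCtx_append {V : Type} (aNode : V → Act I T) (w : List V) (v : V)
    (C : Stk I T) :
    fPCtx aNode (w ++ [v]) C = fACtx (fPCtx aNode w C) (aNode v) := by
  induction w generalizing C with
  | nil => rfl
  | cons x w ih => simp [fPCtx, ih]

theorem fPErr_snoc {V : Type} (sub : T → T → Prop) [DecidableRel sub]
    (aNode : V → Act I T) (w : List V) (v : V) (C : Stk I T) :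
    fPErr sub aNode (w ++ [v]) C = fAErr sub (fPCtx aNode w C) (aNode v) := by
  simp [fPErr]

theorem fAErr_congr (sub : T → T → Prop) [DecidableRel sub] {a : Act I T}
    (ha : NotCopyProp a) {C₁ C₂ : Stk I T}
    (h : fACtx C₁ a = fACtx C₂ a) : fAErr sub C₁ a = fAErr sub C₂ a := by
  cases a with
  | readAttr i η t => simp [fACtx] at h; rw [h]
  | copyAttr iDst ηDst iSrc ηSrc => exact absurd rfl (ha.1 iDst ηDst iSrc ηSrc)
  | propagateAttrs => exact absurd rfl ha.2
  | _ => rfl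

/-- suppose no vertex of the labeled control-flow graph is
labeled `CopyAttr` or `PropagateAttrs`.  Let `w = w₁·v` and `w' = w₂·v` be two
paths ending at the same vertex `v`, and let `C ∈ 𝒞`.  If
`f_pCtx(w, C) = f_pCtx(w', C)`, then `f_pErr(w, C) = f_pErr(w', C)`. -/
theorem fPErr_of_fPCtx_eq (sub : T → T → Prop) [DecidableRel sub]
    (hsubRefl : ∀ t : T, sub t t)
    (aNode : V → Act I T) (hncp : ∀ v : V, NotCopyProp (aNode v))
    (w₁ w₂ : List V) (v : V) (C : Stk I T)
    (h : fPCtx aNode (w₁ ++ [v]) C = fPCtx aNode (w₂ ++ [v]) C) :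
    fPErr sub aNode (w₁ ++ [v]) C = fPErr sub aNode (w₂ ++ [v]) C := by
  rw [fPCtx_append, fPCtx_append] at h
  rw [fPErr_snoc, fPErr_snoc]
  exact fAErr_congr sub (hncp v) h
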